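/- Let H be a connected k-uniform hypergraph on n vertices. Then λ_{n-1}(H) ≤ (2/(k-1))·h(H), where h(H) is the Cheeger constant. -/

import Mathlib

/-!
By Courant–Fischer, `λ_{n-1}` is at most the largest Rayleigh quotient of the normalized
Laplacian on any plane. Take `S` attaining the Cheeger constant and the plane spanned by
`D^{1/2} 1_S` and `D^{1/2} 1_{Sᶜ}`. For `x` equal to `b` on `S` and `a` off `S`, only pairs across
the cut contribute to the Laplacian form, each codegree with weight `1/(k-1)`, so it equals
`(a - b)² |∂S| / (k - 1)`; meanwhile `‖D^{1/2} x‖² = b² vol S + a² vol Sᶜ ≥ (a - b)² vol S / 2`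
because `vol S ≤ vol Sᶜ`.
-/

open Finset

variable {n : ℕ}

def hdeg (E : Finset (Finset (Fin n))) (v : Fin n) : ℕ :=
  (E.filter fun e => v ∈ e).card

def codeg (E : Finset (Finset (Fin n))) (u v : Fin n) : ℕ :=
  (E.filter fun e => u ∈ e ∧ v ∈ e).card

noncomputable def adjMat (E : Finset (Finset (Fin n))) : Matrix (Fin n) (Fin n) ℝ :=
  fun u v => if u = v then 0
    else ∑ e ∈ E.filter (fun e => u ∈ e ∧ v ∈ e), (1 : ℝ) / ((e.card : ℝ) - 1)

noncomputable def lapMat (E : Finset (Finset (Fin n))) : Matrix (Fin n) (Fin n) ℝ :=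
  Matrix.diagonal (fun v => (hdeg E v : ℝ)) - adjMat E

noncomputable def normLap (E : Finset (Finset (Fin n))) : Matrix (Fin n) (Fin n) ℝ :=
  Matrix.diagonal (fun v => (hdeg E v : ℝ) ^ (-(1/2) : ℝ)) * lapMat E *
    Matrix.diagonal (fun v => (hdeg E v : ℝ) ^ (-(1/2) : ℝ))

noncomputable def eigsAsc (M : Matrix (Fin n) (Fin n) ℝ) : Fin n → ℝ :=
  if h : M.IsHermitian then (h.eigenvalues ∘ Tuple.sort h.eigenvalues) else 0

noncomputable def volR {n : ℕ} (E : Finset (Finset (Fin n))) (S : Finset (Fin n)) : ℝ :=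
  ∑ v ∈ S, (hdeg E v : ℝ)

noncomputable def bndR {n : ℕ} (E : Finset (Finset (Fin n))) (S : Finset (Fin n)) : ℝ :=
  ∑ u ∈ S, ∑ v ∈ Sᶜ, (codeg E u v : ℝ)

noncomputable def cheeger {n : ℕ} (E : Finset (Finset (Fin n))) : ℝ :=
  sInf {x : ℝ | ∃ S : Finset (Fin n), S.Nonempty ∧ S ≠ Finset.univ ∧
    volR E S ≤ volR E Sᶜ ∧ x = bndR E S / volR E S}

open Matrix

namespace Matrix.IsHermitian

variable {ι : Type*} [Fintype ι] [DecidableEq ι] {M : Matrix ι ι ℝ} (hM : M.IsHermitian)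

lemma dotProduct_eq_sum_eigenvectorBasis (u v : ι → ℝ) :
    u ⬝ᵥ v = ∑ i, (⇑(hM.eigenvectorBasis i) ⬝ᵥ u) * (⇑(hM.eigenvectorBasis i) ⬝ᵥ v) := by
  have := hM.eigenvectorBasis.sum_inner_mul_inner (WithLp.toLp 2 u) (WithLp.toLp 2 v)
  simpa [EuclideanSpace.inner_eq_star_dotProduct, dotProduct_comm] using this.symm

lemma eigenvectorBasis_dotProduct_mulVec (i : ι) (u : ι → ℝ) :
    ⇑(hM.eigenvectorBasis i) ⬝ᵥ (M *ᵥ u) = hM.eigenvalues i * (⇑(hM.eigenvectorBasis i) ⬝ᵥ u) := by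
  rw [dotProduct_mulVec, ← mulVec_transpose, (isHermitian_iff_isSymm.1 hM).eq,
    hM.mulVec_eigenvectorBasis, smul_dotProduct, smul_eq_mul]

lemma dotProduct_mulVec_eq_sum (u : ι → ℝ) :
    u ⬝ᵥ (M *ᵥ u) = ∑ i, hM.eigenvalues i * (⇑(hM.eigenvectorBasis i) ⬝ᵥ u) ^ 2 := by
  rw [hM.dotProduct_eq_sum_eigenvectorBasis]
  simp only [eigenvectorBasis_dotProduct_mulVec]
  exact Finset.sum_congr rfl fun i _ => by ring

lemma dotProduct_self_eq_sum (u : ι → ℝ) :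
    u ⬝ᵥ u = ∑ i, (⇑(hM.eigenvectorBasis i) ⬝ᵥ u) ^ 2 := by
  simp only [hM.dotProduct_eq_sum_eigenvectorBasis u u, sq]

end Matrix.IsHermitian

lemma eigsAsc_one_le_eigenvalues {M : Matrix (Fin n) (Fin n) ℝ} (hM : M.IsHermitian)
    (hn : 1 < n) {i : Fin n} (hi : i ≠ Tuple.sort hM.eigenvalues ⟨0, by omega⟩) :
    eigsAsc M ⟨1, hn⟩ ≤ hM.eigenvalues i := by
  set σ := Tuple.sort hM.eigenvalues
  have hpos : (⟨1, hn⟩ : Fin n) ≤ σ.symm i := by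
    rw [Fin.le_def, Nat.one_le_iff_ne_zero]
    intro h0
    exact hi (by rw [← Fin.ext (a := σ.symm i) (b := ⟨0, by omega⟩) h0, Equiv.apply_symm_apply])
  rw [eigsAsc, dif_pos hM]
  simpa [σ] using Tuple.monotone_sort hM.eigenvalues hpos

/-- Courant–Fischer for the second smallest eigenvalue: some nonzero vector of the plane is
orthogonal to an eigenvector of the smallest eigenvalue. -/
lemma eigsAsc_one_le_of_linearIndependent {M : Matrix (Fin n) (Fin n) ℝ}
    (hM : M.IsHermitian) (hn : 1 < n) {w y : Fin n → ℝ} (hwy : LinearIndependent ℝ ![w, y])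
    {c : ℝ} (hc : ∀ a b : ℝ,
      (a • w + b • y) ⬝ᵥ (M *ᵥ (a • w + b • y)) ≤ c * ((a • w + b • y) ⬝ᵥ (a • w + b • y))) :
    eigsAsc M ⟨1, hn⟩ ≤ c := by
  set i₀ := Tuple.sort hM.eigenvalues ⟨0, by omega⟩
  set f : (Fin n → ℝ) → ℝ := fun u => ⇑(hM.eigenvectorBasis i₀) ⬝ᵥ u
  obtain ⟨a, b, hab, hfab⟩ : ∃ a b : ℝ, (a, b) ≠ (0, 0) ∧ f (a • w + b • y) = 0 := by
    by_cases hw : f w = 0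
    · exact ⟨1, 0, by simp, by simpa [f] using hw⟩
    · refine ⟨f y, -f w, by simp [hw], ?_⟩
      simp only [f, dotProduct_add, dotProduct_smul, smul_eq_mul]
      ring
  set u := a • w + b • y
  have hu : u ≠ 0 := fun h => hab (by
    obtain ⟨ha, hb⟩ := LinearIndependent.pair_iff.1 hwy a b h
    simp [ha, hb])
  have hupos : 0 < u ⬝ᵥ u := by
    obtain ⟨j, hj⟩ := Function.ne_iff.1 hu
    exact Finset.sum_pos' (fun i _ => mul_self_nonneg _) ⟨j, Finset.mem_univ _, mul_self_pos.2 hj⟩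
  have hlow : eigsAsc M ⟨1, hn⟩ * (u ⬝ᵥ u) ≤ u ⬝ᵥ (M *ᵥ u) := by
    rw [hM.dotProduct_self_eq_sum, hM.dotProduct_mulVec_eq_sum, Finset.mul_sum]
    refine Finset.sum_le_sum fun i _ => ?_
    by_cases hi : i = i₀
    · have hfi : ⇑(hM.eigenvectorBasis i) ⬝ᵥ u = 0 := hi ▸ hfab
      simp [hfi]
    · exact mul_le_mul_of_nonneg_right (eigsAsc_one_le_eigenvalues hM hn hi) (sq_nonneg _)
  exact le_of_mul_le_mul_right (hlow.trans (hc a b)) hupos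

section QuadraticForm

variable {ι R : Type*} [Fintype ι] [DecidableEq ι]

lemma two_mul_dotProduct_diagonal_sub_mulVec [CommRing R] {A : Matrix ι ι R} (hA : A.IsSymm)
    {d : ι → R} (hd : ∀ u, ∑ v, A u v = d u) (x : ι → R) :
    2 * (x ⬝ᵥ ((diagonal d - A) *ᵥ x)) = ∑ u, ∑ v, A u v * (x u - x v) ^ 2 := by
  have hcol : ∑ u, ∑ v, A u v * x v ^ 2 = ∑ v, d v * x v ^ 2 := by
    rw [Finset.sum_comm]
    refine Finset.sum_congr rfl fun v _ => ?_
    simp_rw [hA.apply v, ← Finset.sum_mul, hd]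
  have hrow : ∑ u, ∑ v, A u v * x u ^ 2 = ∑ u, d u * x u ^ 2 := by
    simp_rw [← Finset.sum_mul, hd]
  have hexp : ∀ u v, A u v * (x u - x v) ^ 2
      = A u v * x u ^ 2 + A u v * x v ^ 2 - 2 * (x u * (A u v * x v)) := fun u v => by ring
  have hquad : x ⬝ᵥ ((diagonal d - A) *ᵥ x)
      = ∑ u, d u * x u ^ 2 - ∑ u, ∑ v, x u * (A u v * x v) := by
    rw [sub_mulVec, dotProduct_sub]
    congr 1
    · exact Finset.sum_congr rfl fun u _ => by rw [mulVec_diagonal]; ring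
    · simp only [dotProduct, mulVec, Finset.mul_sum]
  simp_rw [hquad, hexp, Finset.sum_sub_distrib, Finset.sum_add_distrib, hrow, hcol,
    ← Finset.mul_sum]
  ring

lemma sum_sum_mul_sq_sub_ite [CommRing R] {A : Matrix ι ι R} (hA : A.IsSymm) (S : Finset ι)
    (a b : R) :
    ∑ u, ∑ v, A u v * ((if u ∈ S then b else a) - (if v ∈ S then b else a)) ^ 2
      = 2 * (a - b) ^ 2 * ∑ u ∈ S, ∑ v ∈ Sᶜ, A u v := by
  have hS : ∀ u ∈ S, ∑ v, A u v * ((if u ∈ S then b else a) - (if v ∈ S then b else a)) ^ 2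
      = (a - b) ^ 2 * ∑ v ∈ Sᶜ, A u v := fun u hu => by
    rw [← S.sum_add_sum_compl, Finset.sum_eq_zero fun v hv => by simp [hu, hv], zero_add,
      Finset.mul_sum]
    exact Finset.sum_congr rfl fun v hv => by
      simp only [hu, Finset.mem_compl.1 hv, ↓reduceIte]; ring
  have hSc : ∀ u ∈ Sᶜ, ∑ v, A u v * ((if u ∈ S then b else a) - (if v ∈ S then b else a)) ^ 2
      = (a - b) ^ 2 * ∑ v ∈ S, A u v := fun u hu => by
    rw [← S.sum_add_sum_compl, Finset.sum_eq_zero (s := Sᶜ) fun v hv => by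
      simp [Finset.mem_compl.1 hu, Finset.mem_compl.1 hv], add_zero, Finset.mul_sum]
    exact Finset.sum_congr rfl fun v hv => by
      simp only [Finset.mem_compl.1 hu, hv, ↓reduceIte]; ring
  have hswap : ∑ u ∈ Sᶜ, ∑ v ∈ S, A u v = ∑ u ∈ S, ∑ v ∈ Sᶜ, A u v := by
    rw [Finset.sum_comm (f := A)]
    simp_rw [hA.apply]
  rw [← S.sum_add_sum_compl, Finset.sum_congr rfl hS, Finset.sum_congr rfl hSc,
    ← Finset.mul_sum, ← Finset.mul_sum, hswap]
  ring

lemma dotProduct_mul_mulVec_diagonal_inv [Field R] (L : Matrix ι ι R) {s : ι → R}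
    (hs : ∀ i, s i ≠ 0) (x : ι → R) :
    (s * x) ⬝ᵥ ((diagonal s⁻¹ * L * diagonal s⁻¹) *ᵥ (s * x)) = x ⬝ᵥ (L *ᵥ x) := by
  have hcancel : ∀ i, s⁻¹ i * (s * x) i = x i := fun i => by
    simp [← mul_assoc, inv_mul_cancel₀ (hs i)]
  have hright : diagonal s⁻¹ *ᵥ (s * x) = x := funext fun i => by rw [mulVec_diagonal, hcancel]
  have hleft : (s * x) ᵥ* diagonal s⁻¹ = x := funext fun i => by
    rw [vecMul_diagonal, mul_comm, hcancel]
  rw [← mulVec_mulVec, hright, ← mulVec_mulVec, dotProduct_mulVec, hleft]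

end QuadraticForm

section Hypergraph

variable {k : ℕ} {E : Finset (Finset (Fin n))}

lemma adjMat_isSymm (E : Finset (Finset (Fin n))) : (adjMat E).IsSymm :=
  IsSymm.ext fun u v => by
    unfold adjMat
    simp only [eq_comm (a := v), and_comm (a := v ∈ _)]

lemma adjMat_of_ne (hunif : ∀ e ∈ E, e.card = k) {u v : Fin n} (huv : u ≠ v) :
    adjMat E u v = codeg E u v / ((k : ℝ) - 1) := by
  rw [adjMat, if_neg huv, codeg, Finset.sum_congr rfl fun e he => by
    rw [hunif e (Finset.mem_filter.1 he).1], Finset.sum_const, nsmul_eq_mul, mul_one_div]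

lemma sum_codeg_erase (hunif : ∀ e ∈ E, e.card = k) (u : Fin n) :
    ∑ v ∈ univ.erase u, codeg E u v = hdeg E u * (k - 1) := by
  simp_rw [codeg, hdeg, Finset.card_filter]
  rw [Finset.sum_comm, Finset.sum_mul]
  refine Finset.sum_congr rfl fun e he => ?_
  by_cases hu : u ∈ e
  · have herase : (univ.erase u).filter (· ∈ e) = e.erase u := by
      ext v; simp [and_comm]
    simp only [hu, true_and, if_true, one_mul, ← Finset.card_filter, herase,
      Finset.card_erase_of_mem hu, hunif e he]
  · simp [hu]

lemma sum_adjMat (hk : 2 ≤ k) (hunif : ∀ e ∈ E, e.card = k) (u : Fin n) :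
    ∑ v, adjMat E u v = hdeg E u := by
  have hk1 : (k : ℝ) - 1 ≠ 0 := by
    have : (2 : ℝ) ≤ k := by exact_mod_cast hk
    linarith
  rw [← Finset.add_sum_erase _ _ (Finset.mem_univ u), show adjMat E u u = 0 by simp [adjMat],
    zero_add, Finset.sum_congr rfl fun v hv => adjMat_of_ne hunif (Finset.ne_of_mem_erase hv).symm,
    ← Finset.sum_div, ← Nat.cast_sum, sum_codeg_erase hunif, Nat.cast_mul,
    Nat.cast_sub (by omega : 1 ≤ k), Nat.cast_one, mul_div_assoc, div_self hk1, mul_one]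

lemma lapMat_isHermitian (E : Finset (Finset (Fin n))) : (lapMat E).IsHermitian :=
  (isHermitian_diagonal _).sub (isHermitian_iff_isSymm.2 (adjMat_isSymm E))

lemma normLap_eq (E : Finset (Finset (Fin n))) :
    normLap E = diagonal (fun v => √(hdeg E v : ℝ))⁻¹ * lapMat E *
      diagonal (fun v => √(hdeg E v : ℝ))⁻¹ := by
  have hpow : (fun v => (hdeg E v : ℝ) ^ (-(1 / 2) : ℝ)) = (fun v => √(hdeg E v : ℝ))⁻¹ :=
    funext fun v => by rw [Pi.inv_apply, Real.sqrt_eq_rpow, Real.rpow_neg (Nat.cast_nonneg _)]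
  rw [normLap, hpow]

lemma normLap_isHermitian (E : Finset (Finset (Fin n))) : (normLap E).IsHermitian := by
  have := isHermitian_conjTranspose_mul_mul (diagonal (fun v => √(hdeg E v : ℝ))⁻¹)
    (lapMat_isHermitian E)
  rwa [diagonal_conjTranspose, star_trivial, ← normLap_eq] at this

lemma hdeg_pos (hn : 2 ≤ n)
    (hconn : ∀ u v : Fin n, Relation.ReflTransGen (fun a b => ∃ e ∈ E, a ∈ e ∧ b ∈ e) u v)
    (v : Fin n) : 0 < hdeg E v := by
  have : Nontrivial (Fin n) := Fin.nontrivial_iff_two_le.2 hn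
  obtain ⟨u, hvu⟩ := exists_ne v
  obtain hvu' | ⟨-, ⟨e, he, hve, -⟩, -⟩ := (hconn v u).cases_head
  · exact absurd hvu' hvu.symm
  · exact Finset.card_pos.2 ⟨e, Finset.mem_filter.2 ⟨he, hve⟩⟩

lemma sum_sum_adjMat_compl (hunif : ∀ e ∈ E, e.card = k) (S : Finset (Fin n)) :
    ∑ u ∈ S, ∑ v ∈ Sᶜ, adjMat E u v = bndR E S / ((k : ℝ) - 1) := by
  simp only [bndR, Finset.sum_div]
  exact Finset.sum_congr rfl fun u hu => Finset.sum_congr rfl fun v hv =>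
    adjMat_of_ne hunif fun h => Finset.mem_compl.1 hv (h ▸ hu)

lemma dotProduct_lapMat_mulVec_ite (hk : 2 ≤ k) (hunif : ∀ e ∈ E, e.card = k)
    (S : Finset (Fin n)) (a b : ℝ) :
    (fun v => if v ∈ S then b else a) ⬝ᵥ (lapMat E *ᵥ fun v => if v ∈ S then b else a)
      = (a - b) ^ 2 * (bndR E S / ((k : ℝ) - 1)) := by
  have h := two_mul_dotProduct_diagonal_sub_mulVec (adjMat_isSymm E) (sum_adjMat hk hunif)
    (fun v => if v ∈ S then b else a)
  rw [sum_sum_mul_sq_sub_ite (adjMat_isSymm E), sum_sum_adjMat_compl hunif] at h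
  rw [lapMat]
  linarith

end Hypergraph

lemma volR_pos {E : Finset (Finset (Fin n))} (hd : ∀ v, 0 < hdeg E v) {S : Finset (Fin n)}
    (hS : S.Nonempty) : 0 < volR E S :=
  Finset.sum_pos' (fun _ _ => Nat.cast_nonneg _) (hS.imp fun v hv => ⟨hv, Nat.cast_pos.2 (hd v)⟩)

lemma exists_cheeger_eq (hn : 2 ≤ n) (E : Finset (Finset (Fin n))) :
    ∃ S : Finset (Fin n), S.Nonempty ∧ S ≠ univ ∧ volR E S ≤ volR E Sᶜ ∧
      cheeger E = bndR E S / volR E S := by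
  have : Nontrivial (Fin n) := Fin.nontrivial_iff_two_le.2 hn
  set C := {x : ℝ | ∃ S : Finset (Fin n), S.Nonempty ∧ S ≠ Finset.univ ∧
    volR E S ≤ volR E Sᶜ ∧ x = bndR E S / volR E S}
  have hfin : C.Finite := (Set.finite_range fun S : Finset (Fin n) => bndR E S / volR E S).subset
    fun x ⟨S, _, _, _, hx⟩ => ⟨S, hx.symm⟩
  obtain ⟨v, -, hv⟩ := Finset.exists_min_image univ (fun v => hdeg E v) univ_nonempty
  obtain ⟨u, huv⟩ := exists_ne v
  have hvol : volR E {v} ≤ volR E {v}ᶜ := by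
    rw [volR, Finset.sum_singleton]
    exact (Nat.cast_le.2 (hv u (mem_univ u))).trans <| Finset.single_le_sum
      (f := fun w => (hdeg E w : ℝ)) (fun _ _ => Nat.cast_nonneg _) (by simpa using huv)
  have hne : C.Nonempty := ⟨_, {v}, singleton_nonempty v,
    fun h => huv (Finset.mem_singleton.1 (h ▸ mem_univ u)), hvol, rfl⟩
  exact hne.csInf_mem hfin

section TestVectors

variable {k : ℕ} {E : Finset (Finset (Fin n))}

lemma sqrt_hdeg_ne_zero (hd : ∀ v, 0 < hdeg E v) (v : Fin n) : √(hdeg E v : ℝ) ≠ 0 :=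
  Real.sqrt_ne_zero'.2 (Nat.cast_pos.2 (hd v))

noncomputable def sqrtDegIndicator (E : Finset (Finset (Fin n))) (S : Finset (Fin n)) :
    Fin n → ℝ :=
  fun v => if v ∈ S then √(hdeg E v : ℝ) else 0

lemma smul_sqrtDegIndicator_add_smul (E : Finset (Finset (Fin n))) (S : Finset (Fin n))
    (a b : ℝ) :
    a • sqrtDegIndicator E Sᶜ + b • sqrtDegIndicator E S
      = (fun v => √(hdeg E v : ℝ)) * fun v => if v ∈ S then b else a := by
  ext v
  by_cases hv : v ∈ S <;> simp [sqrtDegIndicator, hv, mul_comm]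

lemma linearIndependent_sqrtDegIndicator (hd : ∀ v, 0 < hdeg E v) {S : Finset (Fin n)}
    (hS : S.Nonempty) (hSc : Sᶜ.Nonempty) :
    LinearIndependent ℝ ![sqrtDegIndicator E Sᶜ, sqrtDegIndicator E S] := by
  refine LinearIndependent.pair_iff.2 fun a b hab => ?_
  rw [smul_sqrtDegIndicator_add_smul] at hab
  obtain ⟨u, hu⟩ := hSc
  obtain ⟨v, hv⟩ := hS
  have hau := congr_fun hab u
  have hbv := congr_fun hab v
  simp only [Pi.mul_apply, Pi.zero_apply, mul_eq_zero, sqrt_hdeg_ne_zero hd, false_or] at hau hbv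
  exact ⟨by simpa [Finset.mem_compl.1 hu] using hau, by simpa [hv] using hbv⟩

lemma dotProduct_self_sqrtDeg_mul_ite (S : Finset (Fin n)) (a b : ℝ) :
    ((fun v => √(hdeg E v : ℝ)) * fun v => if v ∈ S then b else a) ⬝ᵥ
      ((fun v => √(hdeg E v : ℝ)) * fun v => if v ∈ S then b else a)
      = b ^ 2 * volR E S + a ^ 2 * volR E Sᶜ := by
  rw [dotProduct, ← S.sum_add_sum_compl, volR, volR, Finset.mul_sum, Finset.mul_sum]
  congr 1 <;> refine Finset.sum_congr rfl fun v hv => ?_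
  · simp only [Pi.mul_apply, if_pos hv]
    rw [mul_mul_mul_comm, Real.mul_self_sqrt (Nat.cast_nonneg _)]
    ring
  · simp only [Pi.mul_apply, if_neg (Finset.mem_compl.1 hv)]
    rw [mul_mul_mul_comm, Real.mul_self_sqrt (Nat.cast_nonneg _)]
    ring

lemma dotProduct_normLap_mulVec_le (hk : 2 ≤ k) (hunif : ∀ e ∈ E, e.card = k)
    (hd : ∀ v, 0 < hdeg E v) {S : Finset (Fin n)} (hS : 0 < volR E S)
    (hvol : volR E S ≤ volR E Sᶜ) (a b : ℝ) :
    let u := a • sqrtDegIndicator E Sᶜ + b • sqrtDegIndicator E S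
    u ⬝ᵥ (normLap E *ᵥ u) ≤ 2 / ((k : ℝ) - 1) * (bndR E S / volR E S) * (u ⬝ᵥ u) := by
  intro u
  have hk1 : (0 : ℝ) < k - 1 := by
    have : (2 : ℝ) ≤ k := by exact_mod_cast hk
    linarith
  simp only [u, smul_sqrtDegIndicator_add_smul, normLap_eq,
    dotProduct_mul_mulVec_diagonal_inv _ (sqrt_hdeg_ne_zero hd), dotProduct_lapMat_mulVec_ite hk hunif,
    dotProduct_self_sqrtDeg_mul_ite]
  have hB : 0 ≤ bndR E S := Finset.sum_nonneg fun _ _ => Finset.sum_nonneg fun _ _ => by positivity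
  have hq : 0 ≤ bndR E S / ((k : ℝ) - 1) / volR E S := by positivity
  have key : (a - b) ^ 2 * volR E S ≤ 2 * (b ^ 2 * volR E S + a ^ 2 * volR E Sᶜ) := by
    nlinarith [sq_nonneg (a + b), mul_le_mul_of_nonneg_left hvol (sq_nonneg a)]
  calc (a - b) ^ 2 * (bndR E S / ((k : ℝ) - 1))
      = bndR E S / ((k : ℝ) - 1) / volR E S * ((a - b) ^ 2 * volR E S) := by
        field_simp
    _ ≤ bndR E S / ((k : ℝ) - 1) / volR E S * (2 * (b ^ 2 * volR E S + a ^ 2 * volR E Sᶜ)) :=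
        mul_le_mul_of_nonneg_left key hq
    _ = _ := by ring

end TestVectors

theorem stmt17 (n k : ℕ) (hn : 2 ≤ n) (hk : 2 ≤ k) (E : Finset (Finset (Fin n)))
    (hunif : ∀ e ∈ E, e.card = k)
    (hconn : ∀ u v : Fin n,
      Relation.ReflTransGen (fun a b => ∃ e ∈ E, a ∈ e ∧ b ∈ e) u v) :
    eigsAsc (normLap E) ⟨1, by omega⟩ ≤ (2 / ((k : ℝ) - 1)) * cheeger E := by
  have hd : ∀ v, 0 < hdeg E v := hdeg_pos hn hconn
  obtain ⟨S, hS, hSuniv, hvol, hcheeger⟩ := exists_cheeger_eq hn E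
  have hSc : Sᶜ.Nonempty := Finset.nonempty_iff_ne_empty.2 (by rwa [Ne, Finset.compl_eq_empty_iff])
  rw [hcheeger]
  exact eigsAsc_one_le_of_linearIndependent (normLap_isHermitian E) _
    (linearIndependent_sqrtDegIndicator hd hS hSc)
    (dotProduct_normLap_mulVec_le hk hunif hd (volR_pos hd hS) hvol)
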